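/- The family of all trees over ω containing a Laver tree, regarded as a subset of the Polish space Tree_ω, is Σ¹₁-complete: it is analytic, and for every Polish space Y and every analytic set B ⊆ Y there is a Borel measurable function f : Y → Tree_ω whose preimage of this family equals B. -/

import Mathlib

open MeasureTheory

/-- The Polish space `Tree_ω` of all trees over `ω`. -/
abbrev TreeOmega : Type :=
  {x : List ℕ → Bool // ∀ σ τ : List ℕ, x σ = true → τ <+: σ → x τ = true}

/-- `S ⊆ ω^{<ω}` is a tree: closed under initial segments. -/
def IsTreeSet (S : Set (List ℕ)) : Prop :=
  ∀ σ ∈ S, ∀ τ : List ℕ, τ <+: σ → τ ∈ S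

/-- A Laver tree: a tree with a stem `σ` above which every node is
infinitely splitting. -/
def IsLaverTree (S : Set (List ℕ)) : Prop :=
  IsTreeSet S ∧ ∃ σ ∈ S, ∀ τ ∈ S, σ <+: τ → {n : ℕ | τ ++ [n] ∈ S}.Infinite

/-- The family of all trees over `ω` containing a Laver tree. -/
def laverFam : Set TreeOmega :=
  {T | ∃ S : Set (List ℕ), IsLaverTree S ∧ S ⊆ {σ | T.1 σ = true}}

/-!
Every analytic set `B` in a Polish space is the Souslin operation applied to closed sets
`C s = closure (g '' N_s)`, where `g` maps Baire space continuously onto `B` and `N_s` is the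
cylinder of sequences extending `s`. Reading each entry of a finite sequence as a pair via
`Nat.unpair`, a point `y` is sent to the tree of sequences whose first coordinates `s` satisfy
`y ∈ C s`. The second coordinates are unconstrained, so every infinite branch of
`{s | y ∈ C s}` yields a Laver subtree with empty stem, and conversely any branch of a Laver subtree
projects to such a branch; hence the tree contains a Laver tree iff `y ∈ B`. Analyticity of the
family: it is the projection of the Borel set of pairs `(T, S)` with `S` a Laver subtree of `T`.
-/

open Set

def initSeg (x : ℕ → ℕ) (n : ℕ) : List ℕ := (List.range n).map x

@[simp] lemma length_initSeg (x : ℕ → ℕ) (n : ℕ) : (initSeg x n).length = n := by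
  simp [initSeg]

lemma initSeg_succ (x : ℕ → ℕ) (n : ℕ) : initSeg x (n + 1) = initSeg x n ++ [x n] := by
  simp [initSeg, List.range_succ]

lemma take_initSeg (x : ℕ → ℕ) {m n : ℕ} (h : m ≤ n) : (initSeg x n).take m = initSeg x m := by
  simp [initSeg, ← List.map_take, List.take_range, Nat.min_eq_left h]

@[simp] lemma getElem_initSeg (x : ℕ → ℕ) {n i : ℕ} (h : i < (initSeg x n).length) :
    (initSeg x n)[i] = x i := by
  simp [initSeg]

lemma initSeg_eq_initSeg_iff {x y : ℕ → ℕ} {n : ℕ} :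
    initSeg x n = initSeg y n ↔ ∀ i < n, x i = y i := by
  simp [initSeg, List.map_inj_left]

lemma exists_forall_initSeg_prefix {t : ℕ → List ℕ} (hstep : ∀ n, t n <+: t (n + 1))
    (hlen : ∀ n, n ≤ (t n).length) : ∃ x : ℕ → ℕ, ∀ n, initSeg x n <+: t n := by
  have hmono : ∀ {m n}, m ≤ n → t m <+: t n := fun hmn =>
    Nat.le_induction (List.prefix_refl _) (fun _ _ ih => ih.trans (hstep _)) _ hmn
  refine ⟨fun i => (t (i + 1)).getD i 0, fun n => ?_⟩
  have : initSeg (fun i => (t (i + 1)).getD i 0) n = (t n).take n := by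
    refine List.ext_getElem (by simp [hlen n]) fun i hi _ => ?_
    have hi' : i < (t (i + 1)).length := by have := hlen (i + 1); omega
    simp only [getElem_initSeg, List.getElem_take, List.getD_eq_getElem _ _ hi']
    exact (hmono (by simp at hi; omega)).getElem hi'
  rw [this]
  exact List.take_prefix _ _

def listCylinder (s : List ℕ) : Set (ℕ → ℕ) := {x | initSeg x s.length = s}

lemma listCylinder_initSeg (x : ℕ → ℕ) (n : ℕ) :
    listCylinder (initSeg x n) = PiNat.cylinder x n := by
  ext y
  simp [listCylinder, initSeg_eq_initSeg_iff, PiNat.mem_cylinder_iff]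

lemma listCylinder_anti {s t : List ℕ} (h : s <+: t) : listCylinder t ⊆ listCylinder s := by
  intro x (hx : initSeg x t.length = t)
  rw [List.prefix_iff_eq_take.1 h, ← hx, take_initSeg x h.length_le]
  simp [listCylinder]

lemma exists_cylinder_subset_of_mem_nhds {s : Set (ℕ → ℕ)} {x : ℕ → ℕ} (hs : s ∈ nhds x) :
    ∃ n, PiNat.cylinder x n ⊆ s := by
  obtain ⟨_, ⟨z, n, rfl⟩, hx, hsub⟩ :=
    (PiNat.isTopologicalBasis_cylinders fun _ => ℕ).mem_nhds_iff.1 hs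
  exact ⟨n, PiNat.mem_cylinder_iff_eq.1 hx ▸ hsub⟩

lemma mem_range_iff_exists_forall_mem_closure_image_listCylinder {Y : Type*} [TopologicalSpace Y]
    [T2Space Y] {g : (ℕ → ℕ) → Y} (hg : Continuous g) {y : Y} :
    y ∈ range g ↔ ∃ x, ∀ n, y ∈ closure (g '' listCylinder (initSeg x n)) := by
  refine ⟨?_, fun ⟨x, hx⟩ => ?_⟩
  · rintro ⟨x, rfl⟩
    exact ⟨x, fun n => subset_closure (mem_image_of_mem g (by simp [listCylinder]))⟩
  · by_contra hy
    obtain ⟨U, V, hU, hV, hxU, hyV, hUV⟩ := t2_separation fun h : g x = y => hy ⟨x, h⟩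
    obtain ⟨n, hn⟩ :=
      exists_cylinder_subset_of_mem_nhds (hg.continuousAt.preimage_mem_nhds (hU.mem_nhds hxU))
    obtain ⟨_, hzV, z, hz, rfl⟩ := mem_closure_iff.1 (hx n) V hV hyV
    rw [listCylinder_initSeg] at hz
    exact hUV.ne_of_mem (hn hz) hzV rfl

def souslinOp {Y : Type*} (C : List ℕ → Set Y) : Set Y := {y | ∃ x, ∀ n, y ∈ C (initSeg x n)}

theorem MeasureTheory.AnalyticSet.exists_eq_souslinOp {Y : Type*} [TopologicalSpace Y]
    [T2Space Y] {B : Set Y} (hB : AnalyticSet B) : ∃ C : List ℕ → Set Y, (∀ s, IsClosed (C s)) ∧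
      (∀ s t, s <+: t → C t ⊆ C s) ∧ B = souslinOp C := by
  rcases (AnalyticSet_def B ▸ hB) with rfl | ⟨g, hg, rfl⟩
  · exact ⟨fun _ => ∅, fun _ => isClosed_empty, fun _ _ _ => subset_rfl, by simp [souslinOp]⟩
  · refine ⟨fun s => closure (g '' listCylinder s), fun _ => isClosed_closure,
      fun s t h => closure_mono (image_mono (listCylinder_anti h)), ?_⟩
    ext y
    exact mem_range_iff_exists_forall_mem_closure_image_listCylinder hg

lemma IsTreeSet.exists_forall_initSeg_mem {S : Set (List ℕ)} (hS : IsTreeSet S) {σ : List ℕ}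
    (hσ : σ ∈ S) (hsucc : ∀ τ ∈ S, σ <+: τ → ∃ n, τ ++ [n] ∈ S) :
    ∃ x : ℕ → ℕ, ∀ n, initSeg x n ∈ S := by
  choose! c hc using hsucc
  set t : ℕ → List ℕ := fun n => (fun τ => τ ++ [c τ])^[n] σ
  have ht_succ (n : ℕ) : t (n + 1) = t n ++ [c (t n)] := Function.iterate_succ_apply' _ _ _
  have ht (n : ℕ) : t n ∈ S ∧ σ <+: t n ∧ (t n).length = σ.length + n := by
    induction n with
    | zero => exact ⟨hσ, List.prefix_refl σ, rfl⟩
    | succ n ih =>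
      rw [ht_succ]
      exact ⟨hc _ ih.1 ih.2.1, ih.2.1.trans (List.prefix_append _ _), by simp [ih.2.2]; omega⟩
  obtain ⟨x, hx⟩ := exists_forall_initSeg_prefix (fun n => ht_succ n ▸ List.prefix_append _ _)
    fun n => by have := (ht n).2.2; omega
  exact ⟨x, fun n => hS _ (ht n).1 _ (hx n)⟩

def unpairFst (s : List ℕ) : List ℕ := s.map fun n => n.unpair.1

@[simp] lemma length_unpairFst (s : List ℕ) : (unpairFst s).length = s.length := by
  simp [unpairFst]

lemma unpairFst_initSeg (x : ℕ → ℕ) (n : ℕ) :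
    unpairFst (initSeg x n) = initSeg (fun i => (x i).unpair.1) n := by
  simp [unpairFst, initSeg]

lemma isLaverTree_setOf_unpairFst_eq_initSeg (x : ℕ → ℕ) :
    IsLaverTree {s | unpairFst s = initSeg x s.length} := by
  refine ⟨fun σ (hσ : _ = _) τ hτ => ?_, [], rfl, fun τ (hτ : _ = _) _ => ?_⟩
  · have hτσ : unpairFst τ <+: unpairFst σ := hτ.map _
    show unpairFst τ = initSeg x τ.length
    rw [List.prefix_iff_eq_take.1 hτσ, hσ]
    simpa using take_initSeg x hτ.length_le
  · refine infinite_of_injective_forall_mem (f := fun k => Nat.pair (x τ.length) k)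
      (fun a b h => by simpa using congrArg (fun m => m.unpair.2) h) fun k => ?_
    show unpairFst _ = initSeg x _
    simp [unpairFst, initSeg_succ, ← hτ]

theorem exists_isLaverTree_subset_preimage_unpairFst_iff (U : Set (List ℕ)) :
    (∃ S, IsLaverTree S ∧ S ⊆ unpairFst ⁻¹' U) ↔ ∃ x : ℕ → ℕ, ∀ n, initSeg x n ∈ U := by
  constructor
  · rintro ⟨S, ⟨hS, σ, hσ, hsplit⟩, hSU⟩
    obtain ⟨x, hx⟩ := hS.exists_forall_initSeg_mem hσ fun τ hτ h => (hsplit τ hτ h).nonempty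
    exact ⟨fun i => (x i).unpair.1, fun n => unpairFst_initSeg x n ▸ hSU (hx n)⟩
  · rintro ⟨x, hx⟩
    exact ⟨_, isLaverTree_setOf_unpairFst_eq_initSeg x, fun s (hs : _ = _) => by
      simpa [← hs] using hx s.length⟩

open Classical in
noncomputable def TreeOmega.ofIsTreeSet (S : Set (List ℕ)) (hS : IsTreeSet S) : TreeOmega :=
  ⟨fun s => decide (s ∈ S), fun σ τ hσ hτ => by simpa using hS σ (by simpa using hσ) τ hτ⟩

lemma TreeOmega.ofIsTreeSet_mem_laverFam_iff {S : Set (List ℕ)} (hS : IsTreeSet S) :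
    ofIsTreeSet S hS ∈ laverFam ↔ ∃ S', IsLaverTree S' ∧ S' ⊆ S := by
  simp [laverFam, ofIsTreeSet]

section Reduction

variable {Y : Type*} (C : List ℕ → Set Y) (hC : ∀ s t, s <+: t → C t ⊆ C s)

noncomputable def inflatedTree (y : Y) : TreeOmega :=
  .ofIsTreeSet {s | y ∈ C (unpairFst s)} fun _ hσ _ hτ => hC _ _ (hτ.map _) hσ

theorem measurable_inflatedTree [MeasurableSpace Y] (hCm : ∀ s, MeasurableSet (C s)) :
    Measurable (inflatedTree C hC) := by
  refine Measurable.subtype_mk (measurable_pi_lambda _ fun s => measurable_to_bool ?_)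
  simpa [inflatedTree, preimage] using hCm (unpairFst s)

theorem preimage_inflatedTree_laverFam : inflatedTree C hC ⁻¹' laverFam = souslinOp C := by
  ext y
  exact (TreeOmega.ofIsTreeSet_mem_laverFam_iff _).trans
    (exists_isLaverTree_subset_preimage_unpairFst_iff {s | y ∈ C s})

end Reduction

lemma isClosed_setOf_prefix_closed :
    IsClosed {x : List ℕ → Bool | ∀ σ τ : List ℕ, x σ = true → τ <+: σ → x τ = true} := by
  have hclopen (s : List ℕ) : IsClopen {x : List ℕ → Bool | x s = true} :=
    (isClopen_discrete {true}).preimage (continuous_apply s)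
  simp only [ofPred_forall]
  exact isClosed_iInter fun σ => isClosed_iInter fun τ =>
    isClosed_imp (hclopen σ).isOpen (isClosed_imp isOpen_const (hclopen τ).isClosed)

instance : PolishSpace (List ℕ → Bool) := {}

instance : PolishSpace TreeOmega :=
  isClosed_setOf_prefix_closed.polishSpace

lemma measurableSet_isLaverTree :
    MeasurableSet {χ : List ℕ → Bool | IsLaverTree {s | χ s = true}} := by
  simp only [IsLaverTree, IsTreeSet, ← Nat.frequently_atTop_iff_infinite, Filter.frequently_atTop,
    mem_ofPred_eq]
  exact measurableSet_setOfPred.2 (by fun_prop)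

lemma laverFam_eq_image_fst : laverFam = Prod.fst '' {p : TreeOmega × (List ℕ → Bool) |
    IsLaverTree {s | p.2 s = true} ∧ ∀ s, p.2 s = true → p.1.1 s = true} := by
  ext T
  constructor
  · rintro ⟨S, hS, hST⟩
    classical
    exact ⟨(T, fun s => decide (s ∈ S)), by simpa using ⟨hS, hST⟩, rfl⟩
  · rintro ⟨⟨T, χ⟩, ⟨hχ, hχT⟩, rfl⟩
    exact ⟨_, hχ, hχT⟩

theorem analyticSet_laverFam : AnalyticSet laverFam := by
  rw [laverFam_eq_image_fst]
  refine MeasurableSet.analyticSet ?_ |>.image_of_continuous continuous_fst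
  have hval : Measurable fun p : TreeOmega × (List ℕ → Bool) => p.1.1 :=
    measurable_subtype_coe.comp measurable_fst
  exact (measurableSet_isLaverTree.preimage measurable_snd).inter <| measurableSet_setOfPred.2 <|
    .forall fun s => (measurable_snd.eval.eq_const _).imp (hval.eval.eq_const _)

/-- The family of trees containing a Laver tree is `Σ¹₁`-complete: it is analytic,
and every analytic subset of every Polish space Borel-reduces to it. -/
theorem laverFam_analytic_complete :
    AnalyticSet laverFam ∧
      ∀ (Y : Type) [TopologicalSpace Y] [PolishSpace Y]
        [MeasurableSpace Y] [BorelSpace Y] (B : Set Y),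
        AnalyticSet B →
          ∃ f : Y → TreeOmega, Measurable f ∧ f ⁻¹' laverFam = B := by
  refine ⟨analyticSet_laverFam, fun Y _ _ _ _ B hB => ?_⟩
  obtain ⟨C, hC_closed, hC_anti, rfl⟩ := hB.exists_eq_souslinOp
  exact ⟨inflatedTree C hC_anti,
    measurable_inflatedTree C hC_anti fun s => (hC_closed s).measurableSet,
    preimage_inflatedTree_laverFam C hC_anti⟩
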